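/- arXiv:2101.08451 — 5 statements merged into one kernel-verified Lean document; each statement's English description precedes it below -/
import Mathlib

section
/- There exists a unique continuous function V : [0,1] → ℝ such that V(φ0) = (T V)(φ0) for every φ0 ∈ [0,1]; that is, the Bellman operator T maps the space of continuous functions on [0,1] into itself and has a unique continuous fixed point. -/
/-- Advantaged-group threshold θ1(φ0,θ0) (for φ0 < 1). -/
noncomputable def θ1 (σ τ α φ0 θ0 : ℝ) : ℝ :=
  (σ * (1 - α) + (1 - φ0) * τ - φ0 * θ0) / (1 - φ0)

/-- Admissible threshold set Θ(φ0). -/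
def Θ (σ α φ0 : ℝ) : Set ℝ :=
  {θ0 | θ0 ∈ Set.Icc (0 : ℝ) σ ∧ φ0 * (1 - θ0 / σ) ≤ α ∧
    φ0 * (1 - θ0 / σ) + (1 - φ0) ≥ α}

/-- State transition S(φ0,θ0). -/
noncomputable def S (σ φ0 θ0 : ℝ) : ℝ := φ0 - (φ0 / (2 * σ)) * (σ ^ 2 - θ0 ^ 2)

/-- Reward function R(φ0,θ0), with the boundary convention at φ0 = 1. -/
noncomputable def R (σ τ α φ0 θ0 : ℝ) : ℝ :=
  if φ0 < 1 then
    (φ0 / (2 * σ)) * (σ ^ 2 - θ0 ^ 2)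
      + ((1 - φ0) / (2 * σ)) * ((σ + τ) ^ 2 - (θ1 σ τ α φ0 θ0) ^ 2)
  else (1 / (2 * σ)) * (σ ^ 2 - θ0 ^ 2)

/-- Bellman operator (T f)(φ0) = sup over admissible θ0 of R + γ f(S). -/
noncomputable def T (σ τ α γ : ℝ) (f : ℝ → ℝ) (φ0 : ℝ) : ℝ :=
  sSup ((fun θ0 => R σ τ α φ0 θ0 + γ * f (S σ φ0 θ0)) '' Θ σ α φ0)

/-- The tipping point φ0*. -/
noncomputable def φstar (σ τ α γ : ℝ) : ℝ :=
  max 0 (min (1 - α)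
    (1 - (α * σ / (2 * τ)) * (1 + Real.sqrt (1 + 2 * τ * γ / (1 - γ)))))

/-!
For `φ0 ∈ [0, 1]` the admissible set `Θ(φ0)` is an interval whose endpoints depend continuously
on `φ0`; parametrizing it affinely by `t ∈ [0, 1]` turns `T` into a supremum over a fixed compact
set of a jointly continuous objective. Continuity at `φ0 = 1` comes from the balance
`φ0 θ0 + (1 - φ0) θ1 = σ (1 - α) + (1 - φ0) τ`, which exhibits `θ1` as `τ` plus the same
parametrization run backwards at `1 - φ0`. Since the next state stays in `[0, 1]`, `T` is then a
`γ`-contraction of `C([0, 1], ℝ)` for the sup norm, and Banach's fixed point theorem applies.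
-/

open Set TopologicalSpace

section SupImage

variable {β : Type*} {F H : β → ℝ} {K : Set β}

lemma csSup_image_le_csSup_image_add (hK : K.Nonempty) (hH : BddAbove (H '' K)) {ε : ℝ}
    (h : ∀ p ∈ K, F p ≤ H p + ε) : sSup (F '' K) ≤ sSup (H '' K) + ε :=
  csSup_le (hK.image F) <| forall_mem_image.2 fun p hp =>
    (h p hp).trans (add_le_add_left (le_csSup hH (mem_image_of_mem H hp)) ε)

lemma abs_csSup_image_sub_csSup_image_le (hK : K.Nonempty) (hF : BddAbove (F '' K))
    (hH : BddAbove (H '' K)) {ε : ℝ} (h : ∀ p ∈ K, |F p - H p| ≤ ε) :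
    |sSup (F '' K) - sSup (H '' K)| ≤ ε := by
  have h₁ : sSup (F '' K) ≤ sSup (H '' K) + ε :=
    csSup_image_le_csSup_image_add hK hH fun p hp => by linarith [(abs_sub_le_iff.1 (h p hp)).1]
  have h₂ : sSup (H '' K) ≤ sSup (F '' K) + ε :=
    csSup_image_le_csSup_image_add hK hF fun p hp => by linarith [(abs_sub_le_iff.1 (h p hp)).2]
  exact abs_sub_le_iff.2 ⟨by linarith, by linarith⟩

end SupImage

section BellmanOperator

variable {X β : Type*} [TopologicalSpace X] [CompactSpace X] [TopologicalSpace β]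

noncomputable def bellmanOperator (K : Compacts β) (r : C(X × β, ℝ)) (s : C(X × β, X)) (γ : ℝ)
    (f : C(X, ℝ)) : C(X, ℝ) where
  toFun x := sSup ((fun p => r (x, p) + γ * f (s (x, p))) '' K)
  continuous_toFun := K.isCompact.continuous_sSup
    (show Continuous fun q : X × β => r q + γ * f (s q) by fun_prop)

theorem bellmanOperator_contractingWith {K : Compacts β} (hK : (K : Set β).Nonempty)
    (r : C(X × β, ℝ)) (s : C(X × β, X)) {γ : ℝ} (hγ : ‖γ‖₊ < 1) :
    ContractingWith ‖γ‖₊ (bellmanOperator K r s γ) := by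
  refine ⟨hγ, LipschitzWith.of_dist_le_mul fun f g => ?_⟩
  rw [ContinuousMap.dist_le (by positivity)]
  intro x
  have hbdd : ∀ h : C(X, ℝ), BddAbove ((fun p => r (x, p) + γ * h (s (x, p))) '' K) :=
    fun h => K.isCompact.bddAbove_image (by fun_prop)
  refine abs_csSup_image_sub_csSup_image_le hK (hbdd f) (hbdd g) fun p _ => ?_
  rw [add_sub_add_left_eq_sub, ← mul_sub, abs_mul, coe_nnnorm, Real.norm_eq_abs, ← Real.dist_eq]
  exact mul_le_mul_of_nonneg_left (ContinuousMap.dist_apply_le_dist _) (abs_nonneg γ)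

end BellmanOperator

section FairnessModel

variable {σ τ α φ0 θ0 t : ℝ}

noncomputable def thresholdLower (σ α φ0 : ℝ) : ℝ := σ * max (φ0 - α) 0 / max φ0 α

noncomputable def thresholdUpper (σ α φ0 : ℝ) : ℝ := σ * (1 - α) / max φ0 (1 - α)

noncomputable def thresholdPath (σ α φ0 t : ℝ) : ℝ :=
  AffineMap.lineMap (thresholdLower σ α φ0) (thresholdUpper σ α φ0) t

lemma mul_thresholdLower (hα : 0 < α) :
    φ0 * thresholdLower σ α φ0 = σ * max (φ0 - α) 0 := by
  rcases le_total φ0 α with h | h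
  · simp [thresholdLower, h]
  · have : 0 < φ0 := hα.trans_le h
    rw [thresholdLower, max_eq_left h]
    field_simp

lemma mul_thresholdUpper (hα1 : α < 1) :
    φ0 * thresholdUpper σ α φ0 = σ * min φ0 (1 - α) := by
  have : 0 < 1 - α := sub_pos.2 hα1
  rcases le_total φ0 (1 - α) with h | h
  · rw [thresholdUpper, max_eq_right h, min_eq_left h]
    field_simp
  · rw [thresholdUpper, max_eq_left h, min_eq_right h]
    field_simp [this.trans_le h |>.ne']

lemma thresholdLower_le_iff (hσ : 0 < σ) (hα : 0 < α) (hφ0 : 0 ≤ φ0) (hθ0 : 0 ≤ θ0) :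
    thresholdLower σ α φ0 ≤ θ0 ↔ σ * (φ0 - α) ≤ φ0 * θ0 := by
  rw [thresholdLower, div_le_iff₀ (lt_max_of_lt_right hα)]
  rcases le_total φ0 α with h | h
  · rw [max_eq_right (sub_nonpos.2 h), max_eq_right h, mul_zero]
    exact iff_of_true (by positivity) (by nlinarith)
  · rw [max_eq_left (sub_nonneg.2 h), max_eq_left h, mul_comm θ0]

lemma le_thresholdUpper_iff (hα1 : α < 1) (hθ0 : θ0 ∈ Icc 0 σ) :
    θ0 ≤ thresholdUpper σ α φ0 ↔ φ0 * θ0 ≤ σ * (1 - α) := by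
  rw [thresholdUpper, le_div_iff₀ (lt_max_of_lt_right (sub_pos.2 hα1))]
  rcases le_total φ0 (1 - α) with h | h
  · rw [max_eq_right h]
    exact iff_of_true (by nlinarith [hθ0.1, hθ0.2]) (by nlinarith [hθ0.1, hθ0.2])
  · rw [max_eq_left h, mul_comm]

lemma thresholdLower_nonneg (hσ : 0 < σ) (hα : 0 < α) : 0 ≤ thresholdLower σ α φ0 :=
  div_nonneg (mul_nonneg hσ.le (le_max_right _ _)) (hα.le.trans (le_max_right _ _))

lemma thresholdUpper_le (hσ : 0 < σ) (hα1 : α < 1) : thresholdUpper σ α φ0 ≤ σ := by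
  rw [thresholdUpper, div_le_iff₀ (lt_max_of_lt_right (sub_pos.2 hα1))]
  exact mul_le_mul_of_nonneg_left (le_max_right _ _) hσ.le

lemma thresholdLower_le_thresholdUpper (hσ : 0 < σ) (hα : 0 < α) (hα1 : α < 1)
    (hφ0 : φ0 ∈ Icc 0 1) : thresholdLower σ α φ0 ≤ thresholdUpper σ α φ0 := by
  rcases hφ0.1.eq_or_lt with rfl | hpos
  · simpa [thresholdLower, thresholdUpper, hα.le] using
      div_nonneg (mul_nonneg hσ.le (sub_pos.2 hα1).le)
        ((sub_pos.2 hα1).le.trans (le_max_right 0 (1 - α)))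
  · refine le_of_mul_le_mul_left ?_ hpos
    rw [mul_thresholdLower hα, mul_thresholdUpper hα1]
    gcongr
    exact max_le (le_min (by linarith) (by linarith [hφ0.2])) (le_min hpos.le (by linarith))

lemma Θ_eq_Icc (hσ : 0 < σ) (hα : 0 < α) (hα1 : α < 1) (hφ0 : 0 ≤ φ0) :
    Θ σ α φ0 = Icc (thresholdLower σ α φ0) (thresholdUpper σ α φ0) := by
  ext θ0
  have hlow : φ0 * (1 - θ0 / σ) ≤ α ↔ σ * (φ0 - α) ≤ φ0 * θ0 := by
    rw [mul_one_sub, mul_div_assoc', sub_le_comm, le_div_iff₀ hσ, mul_comm]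
  have hup : φ0 * (1 - θ0 / σ) + (1 - φ0) ≥ α ↔ φ0 * θ0 ≤ σ * (1 - α) := by
    rw [show φ0 * (1 - θ0 / σ) + (1 - φ0) = 1 - φ0 * θ0 / σ by ring, ge_iff_le, le_sub_comm,
      div_le_iff₀ hσ, mul_comm σ]
  simp only [Θ, mem_ofPred_eq, hlow, hup, mem_Icc]
  constructor
  · rintro ⟨hθ, h₁, h₂⟩
    exact ⟨(thresholdLower_le_iff hσ hα hφ0 hθ.1).2 h₁, (le_thresholdUpper_iff hα1 hθ).2 h₂⟩
  · rintro ⟨h₁, h₂⟩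
    have hθ : θ0 ∈ Icc 0 σ :=
      ⟨(thresholdLower_nonneg hσ hα).trans h₁, h₂.trans (thresholdUpper_le hσ hα1)⟩
    exact ⟨hθ, (thresholdLower_le_iff hσ hα hφ0 hθ.1).1 h₁, (le_thresholdUpper_iff hα1 hθ).1 h₂⟩

lemma Θ_eq_image_thresholdPath (hσ : 0 < σ) (hα : 0 < α) (hα1 : α < 1) (hφ0 : φ0 ∈ Icc 0 1) :
    Θ σ α φ0 = thresholdPath σ α φ0 '' Icc 0 1 := by
  rw [Θ_eq_Icc hσ hα hα1 hφ0.1,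
    ← segment_eq_Icc (thresholdLower_le_thresholdUpper hσ hα hα1 hφ0), segment_eq_image_lineMap]
  rfl

lemma thresholdPath_mem_Icc (hσ : 0 < σ) (hα : 0 < α) (hα1 : α < 1) (hφ0 : φ0 ∈ Icc 0 1)
    (ht : t ∈ Icc 0 1) : thresholdPath σ α φ0 t ∈ Icc 0 σ := by
  have h := mem_image_of_mem (thresholdPath σ α φ0) ht
  rw [← Θ_eq_image_thresholdPath hσ hα hα1 hφ0] at h
  exact h.1

lemma mul_thresholdPath_add_mul_thresholdPath (hα : 0 < α) (hα1 : α < 1) :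
    φ0 * thresholdPath σ α φ0 t + (1 - φ0) * thresholdPath σ α (1 - φ0) (1 - t) =
      σ * (1 - α) := by
  have h₁ : max (φ0 - α) 0 + min (1 - φ0) (1 - α) = 1 - α := by
    rcases le_total φ0 α with h | h
    · rw [max_eq_right (by linarith), min_eq_right (by linarith)]; ring
    · rw [max_eq_left (by linarith), min_eq_left (by linarith)]; ring
  have h₂ : min φ0 (1 - α) + max (1 - φ0 - α) 0 = 1 - α := by
    rcases le_total φ0 (1 - α) with h | h
    · rw [min_eq_left h, max_eq_left (by linarith)]; ring
    · rw [min_eq_right h, max_eq_right (by linarith)]; ring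
  simp only [thresholdPath, AffineMap.lineMap_apply_ring]
  have hl := mul_thresholdLower (σ := σ) (φ0 := φ0) hα
  have hu := mul_thresholdUpper (σ := σ) (φ0 := φ0) hα1
  have hl' := mul_thresholdLower (σ := σ) (φ0 := 1 - φ0) hα
  have hu' := mul_thresholdUpper (σ := σ) (φ0 := 1 - φ0) hα1
  linear_combination (1 - t) * hl + t * hu + t * hl' + (1 - t) * hu' + σ * (1 - t) * h₁ + σ * t * h₂

-- This removes the apparent singularity of `θ1` at `φ0 = 1`.
lemma θ1_thresholdPath (hα : 0 < α) (hα1 : α < 1) (hφ1 : φ0 < 1) :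
    θ1 σ τ α φ0 (thresholdPath σ α φ0 t) = τ + thresholdPath σ α (1 - φ0) (1 - t) := by
  rw [θ1, div_eq_iff (sub_pos.2 hφ1).ne']
  linear_combination -mul_thresholdPath_add_mul_thresholdPath (σ := σ) (φ0 := φ0) (t := t) hα hα1

noncomputable def pathReward (σ τ α φ0 t : ℝ) : ℝ :=
  φ0 / (2 * σ) * (σ ^ 2 - thresholdPath σ α φ0 t ^ 2) +
    (1 - φ0) / (2 * σ) * ((σ + τ) ^ 2 - (τ + thresholdPath σ α (1 - φ0) (1 - t)) ^ 2)

lemma R_thresholdPath (hα : 0 < α) (hα1 : α < 1) (hφ0 : φ0 ∈ Icc 0 1) :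
    R σ τ α φ0 (thresholdPath σ α φ0 t) = pathReward σ τ α φ0 t := by
  rw [R, pathReward]
  split_ifs with hφ1
  · rw [θ1_thresholdPath hα hα1 hφ1]
  · obtain rfl : φ0 = 1 := le_antisymm hφ0.2 (not_lt.1 hφ1)
    ring

lemma S_mem_Icc (hσ : 0 < σ) (hσ2 : σ ≤ 2) (hφ0 : φ0 ∈ Icc 0 1) (hθ0 : θ0 ∈ Icc 0 σ) :
    S σ φ0 θ0 ∈ Icc 0 1 := by
  obtain ⟨h0, h1⟩ := hφ0
  obtain ⟨h2, h3⟩ := hθ0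
  have hu : (σ ^ 2 - θ0 ^ 2) / (2 * σ) ≤ 1 := by rw [div_le_one (by positivity)]; nlinarith
  have hu0 : 0 ≤ (σ ^ 2 - θ0 ^ 2) / (2 * σ) := div_nonneg (by nlinarith) (by positivity)
  rw [S, mem_Icc, div_mul_comm, mul_comm]
  constructor <;> nlinarith

lemma T_eq_sSup_pathReward (hσ : 0 < σ) (hα : 0 < α) (hα1 : α < 1) (γ : ℝ) (f : ℝ → ℝ)
    (hφ0 : φ0 ∈ Icc 0 1) :
    T σ τ α γ f φ0 = sSup ((fun t => pathReward σ τ α φ0 t +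
      γ * f (S σ φ0 (thresholdPath σ α φ0 t))) '' Icc 0 1) := by
  rw [T, Θ_eq_image_thresholdPath hσ hα hα1 hφ0, ← image_comp]
  exact congrArg sSup <| image_congr fun t _ => by
    rw [Function.comp_apply, R_thresholdPath hα hα1 hφ0]

lemma continuous_thresholdPath (hα : 0 < α) (hα1 : α < 1) :
    Continuous fun p : ℝ × ℝ => thresholdPath σ α p.1 p.2 := by
  have hlow : Continuous (thresholdLower σ α) :=
    Continuous.div (by fun_prop) (by fun_prop) fun _ => (lt_max_of_lt_right hα).ne'
  have hup : Continuous (thresholdUpper σ α) :=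
    Continuous.div (by fun_prop) (by fun_prop) fun _ => (lt_max_of_lt_right (sub_pos.2 hα1)).ne'
  exact (hlow.comp continuous_fst).lineMap (hup.comp continuous_fst) continuous_snd

lemma continuous_pathReward (hα : 0 < α) (hα1 : α < 1) :
    Continuous fun p : ℝ × ℝ => pathReward σ τ α p.1 p.2 := by
  have h := continuous_thresholdPath (σ := σ) hα hα1
  have h' : Continuous fun p : ℝ × ℝ => thresholdPath σ α (1 - p.1) (1 - p.2) :=
    h.comp (f := fun p : ℝ × ℝ => (1 - p.1, 1 - p.2)) (by fun_prop)
  exact ((continuous_fst.div_const _).mul (continuous_const.sub (h.pow 2))).add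
    (((continuous_const.sub continuous_fst).div_const _).mul
      (continuous_const.sub ((continuous_const.add h').pow 2)))

noncomputable def pathRewardMap (σ τ : ℝ) (hα : 0 < α) (hα1 : α < 1) :
    C(Icc (0 : ℝ) 1 × ℝ, ℝ) :=
  ⟨fun q => pathReward σ τ α q.1 q.2,
    (continuous_pathReward hα hα1).comp (continuous_subtype_val.prodMap continuous_id)⟩

-- Clamping into `[0, 1]` is harmless: for admissible parameters the next state already lies there.
noncomputable def nextStateMap (σ : ℝ) (hα : 0 < α) (hα1 : α < 1) :
    C(Icc (0 : ℝ) 1 × ℝ, Icc (0 : ℝ) 1) :=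
  ⟨fun q => projIcc 0 1 zero_le_one (S σ q.1 (thresholdPath σ α q.1 q.2)), by
    have h := continuous_thresholdPath (σ := σ) hα hα1
    have hS : Continuous fun p : ℝ × ℝ => S σ p.1 (thresholdPath σ α p.1 p.2) := by
      unfold S; fun_prop
    exact continuous_projIcc.comp (hS.comp (continuous_subtype_val.prodMap continuous_id))⟩

lemma T_eq_bellmanOperator (hσ : 0 < σ) (hσ2 : σ ≤ 2) (hα : 0 < α) (hα1 : α < 1) (γ : ℝ)
    (f : C(Icc (0 : ℝ) 1, ℝ)) {g : ℝ → ℝ} (hg : ∀ x : Icc (0 : ℝ) 1, g x = f x)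
    (x : Icc (0 : ℝ) 1) :
    T σ τ α γ g x = bellmanOperator ⟨Icc 0 1, isCompact_Icc⟩ (pathRewardMap σ τ hα hα1)
      (nextStateMap σ hα hα1) γ f x := by
  rw [T_eq_sSup_pathReward hσ hα hα1 γ g x.2]
  refine congrArg sSup (image_congr fun t ht => ?_)
  have hS := S_mem_Icc hσ hσ2 x.2 (thresholdPath_mem_Icc hσ hα hα1 x.2 ht)
  simp only [pathRewardMap, nextStateMap, ContinuousMap.coe_mk, projIcc_of_mem _ hS, hg ⟨_, hS⟩]

lemma isFixedPt_bellmanOperator_iff (hσ : 0 < σ) (hσ2 : σ ≤ 2) (hα : 0 < α) (hα1 : α < 1)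
    (γ : ℝ) (f : C(Icc (0 : ℝ) 1, ℝ)) {g : ℝ → ℝ} (hg : ∀ x : Icc (0 : ℝ) 1, g x = f x) :
    Function.IsFixedPt (bellmanOperator ⟨Icc 0 1, isCompact_Icc⟩ (pathRewardMap σ τ hα hα1)
      (nextStateMap σ hα hα1) γ) f ↔ ∀ x ∈ Icc (0 : ℝ) 1, g x = T σ τ α γ g x := by
  rw [Function.IsFixedPt, ContinuousMap.ext_iff, Subtype.forall]
  refine forall₂_congr fun x hx => ?_
  rw [← T_eq_bellmanOperator hσ hσ2 hα hα1 γ f hg ⟨x, hx⟩, ← hg ⟨x, hx⟩, eq_comm]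

end FairnessModel

/-- There is a unique continuous function on [0,1] fixed by the Bellman operator. -/
theorem bellman_unique_continuous_fixed_point (σ τ α γ : ℝ) (hσ : 0 < σ)
    (hτ : 0 < τ) (hστ : σ + τ ≤ 1) (hα : 0 < α) (hα1 : α < 1)
    (hγ : 0 < γ) (hγ1 : γ < 1) :
    ∃ V : ℝ → ℝ,
      (ContinuousOn V (Set.Icc (0 : ℝ) 1) ∧
        ∀ φ0 ∈ Set.Icc (0 : ℝ) 1, V φ0 = T σ τ α γ V φ0) ∧
      ∀ W : ℝ → ℝ,
        (ContinuousOn W (Set.Icc (0 : ℝ) 1) ∧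
          ∀ φ0 ∈ Set.Icc (0 : ℝ) 1, W φ0 = T σ τ α γ W φ0) →
        ∀ x ∈ Set.Icc (0 : ℝ) 1, W x = V x := by
  have hσ2 : σ ≤ 2 := by linarith
  set B := bellmanOperator ⟨Icc (0 : ℝ) 1, isCompact_Icc⟩ (pathRewardMap σ τ hα hα1)
    (nextStateMap σ hα hα1) γ
  have hB : ContractingWith ‖γ‖₊ B := by
    refine bellmanOperator_contractingWith (nonempty_Icc.2 zero_le_one) _ _ ?_
    rwa [← NNReal.coe_lt_coe, coe_nnnorm, Real.norm_of_nonneg hγ.le]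
  have : Nonempty C(Icc (0 : ℝ) 1, ℝ) := ⟨0⟩
  set f₀ := ContractingWith.fixedPoint B hB
  refine ⟨IccExtend zero_le_one f₀, ⟨(continuous_IccExtend_iff.2 f₀.continuous).continuousOn,
    (isFixedPt_bellmanOperator_iff hσ hσ2 hα hα1 γ f₀ (IccExtend_val _ _)).1
      hB.fixedPoint_isFixedPt⟩, ?_⟩
  rintro W ⟨hWc, hW⟩ x hx
  let fW : C(Icc (0 : ℝ) 1, ℝ) := ⟨(Icc 0 1).domRestrict W, hWc.domRestrict⟩
  have hfW : Function.IsFixedPt B fW :=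
    (isFixedPt_bellmanOperator_iff hσ hσ2 hα hα1 γ fW fun _ => rfl).2 hW
  rw [IccExtend_of_mem _ _ hx, show f₀ = fW from (hB.fixedPoint_unique hfW).symm]
  rfl
end

section
/- Let V : [0,1] → ℝ be a continuous Bellman fixed point, i.e., V(φ0) = sup_{θ0 ∈ Θ(φ0)} [R(φ0,θ0) + γ·V(S(φ0,θ0))] for all φ0 ∈ [0,1]. Then V is monotonically decreasing: for all x, y ∈ [0,1] with x ≤ y, V(y) ≤ V(x). -/
/-!
The proof is a contraction argument. Raising the state from `x` to `y` only shrinks the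
admissible set `Θ`, lowers the reward `R` and raises the next state `S`, so every value
`R y θ + γ V (S y θ)` competing in `V y` is at most `R x θ + γ V (S x θ) + γ c ≤ V x + γ c`,
where `c` bounds all increases `V b - V a` with `a ≤ b`. Hence the largest increase `d` (finite, as `V` is continuous on `[0,1]`)
satisfies `d ≤ γ d`, and `γ < 1` forces `d ≤ 0`.
-/

open Set

theorem nonpos_of_le_mul_of_forall_le {ι : Type*} {s : Set ι} {f : ι → ℝ} {γ : ℝ} (hγ : γ < 1)
    (hf : BddAbove (f '' s)) (h : ∀ i ∈ s, ∀ c, (∀ j ∈ s, f j ≤ c) → f i ≤ γ * c) :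
    ∀ i ∈ s, f i ≤ 0 := by
  intro i hi
  set d := sSup (f '' s)
  have hle : ∀ j ∈ s, f j ≤ d := fun j hj => le_csSup hf (mem_image_of_mem f hj)
  have hd : d ≤ γ * d := csSup_le ⟨_, mem_image_of_mem f hi⟩ <| by
    rintro _ ⟨j, hj, rfl⟩
    exact h j hj d hle
  have : d ≤ 0 := by nlinarith
  exact (hle i hi).trans this

section Admissible

variable {σ α : ℝ}

theorem Θ_antitone {x y θ : ℝ} (hσ : 0 < σ) (hxy : x ≤ y)
    (hθ : θ ∈ Θ σ α y) : θ ∈ Θ σ α x := by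
  obtain ⟨⟨h0, h1⟩, h2, h3⟩ := hθ
  have : θ / σ ≤ 1 := div_le_one_of_le₀ h1 hσ.le
  have : 0 ≤ θ / σ := div_nonneg h0 hσ.le
  exact ⟨⟨h0, h1⟩, by nlinarith, by nlinarith⟩

theorem Θ_nonempty {φ : ℝ} (hσ : 0 < σ) (hα : 0 ≤ α) (hα1 : α ≤ 1) (hφ : φ ∈ Icc 0 1) :
    (Θ σ α φ).Nonempty := by
  rcases le_or_gt φ α with hφα | hαφ
  · exact ⟨0, ⟨le_rfl, hσ.le⟩, by simpa using hφα, by simpa using hα1⟩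
  · have hφ0 : 0 < φ := hα.trans_lt hαφ
    -- the threshold at which the first constraint is tight
    have hθ : φ * (1 - σ * (φ - α) / φ / σ) = α := by field_simp; ring
    refine ⟨σ * (φ - α) / φ, ⟨by positivity, ?_⟩, hθ.le, by rw [hθ]; linarith [hφ.2]⟩
    rw [div_le_iff₀ hφ0]
    nlinarith

theorem eq_of_mem_Θ_one {θ : ℝ} (hσ : 0 < σ) (hθ : θ ∈ Θ σ α 1) : θ = σ * (1 - α) := by
  obtain ⟨-, h2, h3⟩ := hθ
  have : θ / σ = 1 - α := by linarith
  field_simp at this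
  linarith

end Admissible

section Transition

variable {σ θ : ℝ}

noncomputable def retention (σ θ : ℝ) : ℝ := 1 - (σ ^ 2 - θ ^ 2) / (2 * σ)

theorem S_eq_mul_retention (φ : ℝ) : S σ φ θ = φ * retention σ θ := by
  unfold S retention
  ring

theorem retention_mem_Icc (hσ : 0 < σ) (hσ2 : σ ≤ 2) (hθ : θ ∈ Icc 0 σ) :
    retention σ θ ∈ Icc 0 1 := by
  obtain ⟨h0, h1⟩ := hθ
  have hσθ : (σ ^ 2 - θ ^ 2) / (2 * σ) ≤ 1 := by
    rw [div_le_one (by positivity)]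
    nlinarith
  have hσθ' : 0 ≤ (σ ^ 2 - θ ^ 2) / (2 * σ) := div_nonneg (by nlinarith) (by positivity)
  exact ⟨by unfold retention; linarith, by unfold retention; linarith⟩

theorem S_mem_Icc_s12 {φ : ℝ} (hσ : 0 < σ) (hσ2 : σ ≤ 2) (hφ : φ ∈ Icc 0 1) (hθ : θ ∈ Icc 0 σ) :
    S σ φ θ ∈ Icc 0 1 := by
  obtain ⟨hr0, hr1⟩ := retention_mem_Icc hσ hσ2 hθ
  rw [S_eq_mul_retention]
  exact ⟨mul_nonneg hφ.1 hr0, mul_le_one₀ hφ.2 hr0 hr1⟩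

theorem S_mono {x y : ℝ} (hσ : 0 < σ) (hσ2 : σ ≤ 2) (hθ : θ ∈ Icc 0 σ) (hxy : x ≤ y) :
    S σ x θ ≤ S σ y θ := by
  simp only [S_eq_mul_retention]
  exact mul_le_mul_of_nonneg_right hxy (retention_mem_Icc hσ hσ2 hθ).1

end Transition

section Reward

variable {σ τ α θ : ℝ}

theorem R_le {φ : ℝ} (hσ : 0 < σ) (hφ : φ ∈ Icc 0 1) :
    R σ τ α φ θ ≤ (σ ^ 2 + (σ + τ) ^ 2) / (2 * σ) := by
  obtain ⟨hφ0, hφ1⟩ := hφ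
  unfold R
  split_ifs
  · rw [div_mul_eq_mul_div, div_mul_eq_mul_div, ← add_div,
      div_le_div_iff_of_pos_right (by positivity)]
    nlinarith [mul_nonneg hφ0 (sq_nonneg θ), mul_nonneg hφ0 (sq_nonneg (σ + τ)),
      mul_nonneg (sub_nonneg.2 hφ1) (sq_nonneg (θ1 σ τ α φ θ)),
      mul_nonneg (sub_nonneg.2 hφ1) (sq_nonneg σ)]
  · rw [one_div_mul_eq_div, div_le_div_iff_of_pos_right (by positivity)]
    nlinarith [sq_nonneg θ, sq_nonneg (σ + τ)]

theorem R_sub_R_of_lt_one {x y : ℝ} (hσ : 0 < σ) (hx : x < 1) (hy : y < 1) :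
    R σ τ α x θ - R σ τ α y θ
      = (y - x) * ((σ * (1 - α) - θ) ^ 2 + 2 * τ * (σ - θ) * (1 - x) * (1 - y))
        / (2 * σ * (1 - x) * (1 - y)) := by
  have : 1 - x ≠ 0 := by linarith
  have : 1 - y ≠ 0 := by linarith
  simp only [R, θ1, if_pos hx, if_pos hy]
  field_simp
  ring

theorem R_sub_R_one {x : ℝ} (hσ : 0 < σ) (hx : x < 1) :
    R σ τ α x (σ * (1 - α)) - R σ τ α 1 (σ * (1 - α)) = (1 - x) * τ * α := by
  have : 1 - x ≠ 0 := by linarith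
  simp only [R, θ1, if_pos hx, lt_irrefl, if_false]
  field_simp
  ring

theorem R_antitone {x y : ℝ} (hσ : 0 < σ) (hτ : 0 ≤ τ) (hα : 0 ≤ α) (hxy : x ≤ y)
    (hy : y ≤ 1) (hθ : θ ∈ Θ σ α y) : R σ τ α y θ ≤ R σ τ α x θ := by
  rcases hy.lt_or_eq with hy1 | rfl
  · have hx1 : x < 1 := hxy.trans_lt hy1
    have hσθ : 0 ≤ σ - θ := sub_nonneg.2 hθ.1.2
    have : 0 ≤ R σ τ α x θ - R σ τ α y θ := by
      rw [R_sub_R_of_lt_one hσ hx1 hy1]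
      apply div_nonneg
      · apply mul_nonneg (by linarith)
        have : 0 ≤ τ * (σ - θ) * (1 - x) * (1 - y) :=
          mul_nonneg (mul_nonneg (mul_nonneg hτ hσθ) (by linarith)) (by linarith)
        nlinarith [sq_nonneg (σ * (1 - α) - θ)]
      · exact mul_nonneg (mul_nonneg (by positivity) (by linarith)) (by linarith)
    linarith
  · obtain rfl := eq_of_mem_Θ_one hσ hθ
    rcases hxy.lt_or_eq with hx1 | rfl
    · have := R_sub_R_one (τ := τ) (α := α) hσ hx1
      nlinarith [mul_nonneg (mul_nonneg (by linarith : (0 : ℝ) ≤ 1 - x) hτ) hα]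
    · exact le_rfl

end Reward

section Bellman

variable {σ τ α γ : ℝ} {V : ℝ → ℝ}

noncomputable def actionValue (σ τ α γ : ℝ) (V : ℝ → ℝ) (φ θ : ℝ) : ℝ :=
  R σ τ α φ θ + γ * V (S σ φ θ)

theorem T_eq_sSup (φ : ℝ) : T σ τ α γ V φ = sSup (actionValue σ τ α γ V φ '' Θ σ α φ) := rfl

theorem bddAbove_actionValue_image {φ M : ℝ} (hσ : 0 < σ) (hσ2 : σ ≤ 2) (hγ : 0 ≤ γ)
    (hφ : φ ∈ Icc 0 1) (hV : ∀ s ∈ Icc (0 : ℝ) 1, V s ≤ M) :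
    BddAbove (actionValue σ τ α γ V φ '' Θ σ α φ) := by
  refine ⟨(σ ^ 2 + (σ + τ) ^ 2) / (2 * σ) + γ * M, ?_⟩
  rintro _ ⟨θ, hθ, rfl⟩
  exact add_le_add (R_le hσ hφ) <|
    mul_le_mul_of_nonneg_left (hV _ (S_mem_Icc_s12 hσ hσ2 hφ hθ.1)) hγ

theorem T_le_T_add_mul {x y c : ℝ} (hσ : 0 < σ) (hσ2 : σ ≤ 2) (hτ : 0 ≤ τ) (hα : 0 ≤ α)
    (hα1 : α ≤ 1) (hγ : 0 ≤ γ) (hx : x ∈ Icc 0 1) (hy : y ∈ Icc 0 1) (hxy : x ≤ y)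
    (hbdd : BddAbove (actionValue σ τ α γ V x '' Θ σ α x))
    (hc : ∀ a ∈ Icc (0 : ℝ) 1, ∀ b ∈ Icc (0 : ℝ) 1, a ≤ b → V b - V a ≤ c) :
    T σ τ α γ V y ≤ T σ τ α γ V x + γ * c := by
  rw [T_eq_sSup]
  refine csSup_le ((Θ_nonempty hσ hα hα1 hy).image _) ?_
  rintro _ ⟨θ, hθy, rfl⟩
  have hθx := Θ_antitone hσ hxy hθy
  have hR := R_antitone (τ := τ) hσ hτ hα hxy hy.2 hθy
  have hV := hc _ (S_mem_Icc_s12 hσ hσ2 hx hθy.1) _ (S_mem_Icc_s12 hσ hσ2 hy hθy.1)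
    (S_mono hσ hσ2 hθy.1 hxy)
  have hTx : actionValue σ τ α γ V x θ ≤ T σ τ α γ V x := le_csSup hbdd ⟨θ, hθx, rfl⟩
  unfold actionValue at hTx ⊢
  nlinarith [mul_le_mul_of_nonneg_left hV hγ]

end Bellman

/-- Any continuous Bellman fixed point is monotonically decreasing on [0,1]. -/
theorem bellman_fixed_point_decreasing (σ τ α γ : ℝ) (hσ : 0 < σ) (hτ : 0 < τ)
    (hστ : σ + τ ≤ 1) (hα : 0 < α) (hα1 : α < 1) (hγ : 0 < γ) (hγ1 : γ < 1)
    (V : ℝ → ℝ) (hVc : ContinuousOn V (Set.Icc (0 : ℝ) 1))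
    (hVfix : ∀ φ0 ∈ Set.Icc (0 : ℝ) 1, V φ0 = T σ τ α γ V φ0) :
    ∀ x ∈ Set.Icc (0 : ℝ) 1, ∀ y ∈ Set.Icc (0 : ℝ) 1, x ≤ y → V y ≤ V x := by
  have hσ2 : σ ≤ 2 := by linarith
  obtain ⟨M, hM⟩ := isCompact_Icc.exists_bound_of_continuousOn hVc
  have hVM : ∀ s ∈ Icc (0 : ℝ) 1, |V s| ≤ M := hM
  let P : Set (ℝ × ℝ) := {p | p.1 ∈ Icc 0 1 ∧ p.2 ∈ Icc 0 1 ∧ p.1 ≤ p.2}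
  have hP := nonpos_of_le_mul_of_forall_le (s := P) (f := fun p => V p.2 - V p.1) hγ1
    ⟨2 * M, by
      rintro _ ⟨p, ⟨hp1, hp2, -⟩, rfl⟩
      linarith [abs_le.1 (hVM _ hp1), abs_le.1 (hVM _ hp2)]⟩
    (by
      rintro ⟨x, y⟩ ⟨hx, hy, hxy⟩ c hc
      have hbdd := bddAbove_actionValue_image (τ := τ) (α := α) hσ hσ2 hγ.le hx
        fun s hs => (abs_le.1 (hVM s hs)).2
      have := T_le_T_add_mul hσ hσ2 hτ.le hα.le hα1.le hγ.le hx hy hxy hbdd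
        fun a ha b hb hab => hc (a, b) ⟨ha, hb, hab⟩
      dsimp only
      rw [hVfix x hx, hVfix y hy]
      linarith)
  intro x hx y hy hxy
  linarith [hP (x, y) ⟨hx, hy, hxy⟩]
end

section
/- Let V : [0,1] → ℝ be a continuous Bellman fixed point. Then for every state φ0 ∈ [0,1] with φ0 < φ0*, the threshold σ is optimal at φ0: σ ∈ Θ(φ0) and V(φ0) = R(φ0,σ) + γ·V(S(φ0,σ)); equivalently (since S(φ0,σ) = φ0), V(φ0) = R(φ0,σ)/(1−γ) = (α/(1−γ))·((σ+τ) − σα/(2(1−φ0))). -/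
/-! Let `g = sigmaReward`, so `g φ = R(φ, σ)`. Since `S(φ, σ) = φ`, always playing
`σ` is worth `W = g / (1 - γ)`. Below the tipping point `W` is a supersolution of the Bellman
equation on `[0, φ₀]`: lowering the threshold to `θ` moves the mass `u = φ (σ - θ)`, which changes
the reward by at most `u (α / (1 - φ) - τ / σ)` and raises the continuation value by at most
`σ α² u / (2 (1 - φ)²)`; `1 - γ` times the first plus `γ` times the second is
`-u / (σ (1 - φ)²) * tippingGap`, and `tippingGap ≥ 0` is what `φ₀ < φ₀*` says once the
square root is squared away. Hence the Bellman operator shrinks `max (V - W)` on `[0, φ₀]` by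
the factor `γ`, so `V ≤ W`, while the admissible choice `σ` gives `V φ₀ ≥ g φ₀ + γ V φ₀`. -/

theorem IsCompact.forall_le_of_sub_le_mul {X : Type*} [TopologicalSpace X] {D : Set X}
    (hD : IsCompact D) {V W : X → ℝ} (hV : ContinuousOn V D) (hW : ContinuousOn W D)
    {γ : ℝ} (hγ : γ < 1)
    (h : ∀ ψ ∈ D, ∀ c, 0 < c → (∀ x ∈ D, V x - W x ≤ c) → V ψ - W ψ ≤ γ * c) :
    ∀ x ∈ D, V x ≤ W x := by
  intro x hx
  obtain ⟨ψ, hψ, hmax⟩ := hD.exists_isMaxOn ⟨x, hx⟩ (hV.sub hW)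
  by_contra! hlt
  have hpos : 0 < V ψ - W ψ := by linarith [show V x - W x ≤ V ψ - W ψ from hmax hx]
  have := h ψ hψ (V ψ - W ψ) hpos fun y hy => hmax hy
  nlinarith

noncomputable def sigmaReward (σ τ α φ : ℝ) : ℝ := α * (σ + τ) - σ * α ^ 2 / (2 * (1 - φ))

noncomputable def tippingGap (σ τ α γ φ : ℝ) : ℝ :=
  (1 - γ) * (τ * (1 - φ) ^ 2 - σ * α * (1 - φ)) - γ * σ ^ 2 * α ^ 2 / 2

section

variable {σ τ α γ φ θ : ℝ}

theorem S_self : S σ φ σ = φ := by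
  simp [S]

theorem sub_S_eq (hσ : σ ≠ 0) : φ - S σ φ θ = φ * (σ - θ) * (σ + θ) / (2 * σ) := by
  unfold S; field_simp; ring

theorem S_le_self (hσ : 0 < σ) (hφ : 0 ≤ φ) (hθ : θ ∈ Set.Icc 0 σ) : S σ φ θ ≤ φ := by
  have := sub_S_eq (φ := φ) (θ := θ) hσ.ne'
  have : 0 ≤ φ * (σ - θ) * (σ + θ) / (2 * σ) := by
    have := hθ.1; have := hθ.2; positivity
  linarith

theorem S_nonneg (hσ : 0 < σ) (hσ2 : σ ≤ 2) (hφ : 0 ≤ φ) :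
    0 ≤ S σ φ θ := by
  have h : S σ φ θ = φ * (σ * (2 - σ) + θ ^ 2) / (2 * σ) := by
    unfold S; field_simp; ring
  rw [h]
  have : 0 ≤ 2 - σ := by linarith
  positivity

theorem sigma_mem_Θ (hσ : 0 < σ) (hα : 0 ≤ α) (hφ : φ ≤ 1 - α) : σ ∈ Θ σ α φ := by
  refine ⟨⟨hσ.le, le_rfl⟩, ?_, ?_⟩ <;> simp only [div_self hσ.ne'] <;> linarith

theorem R_self (hσ : σ ≠ 0) (hφ : φ < 1) : R σ τ α φ σ = sigmaReward σ τ α φ := by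
  have : 1 - φ ≠ 0 := by linarith
  rw [R, if_pos hφ, θ1, sigmaReward]
  field_simp
  ring

theorem R_le_sigmaReward_add (hσ : 0 < σ) (hφ : 0 ≤ φ) (hφ1 : φ < 1) (hθ : θ ≤ σ) :
    R σ τ α φ θ ≤ sigmaReward σ τ α φ + φ * (σ - θ) * (α / (1 - φ) - τ / σ) := by
  have hx : 0 < 1 - φ := by linarith
  have hR : R σ τ α φ θ = sigmaReward σ τ α φ + φ * (σ - θ) * (α / (1 - φ) - τ / σ)
      - φ * (σ - θ) * (σ - θ) / (2 * σ) - (φ * (σ - θ)) ^ 2 / (2 * σ * (1 - φ)) := by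
    rw [R, if_pos hφ1, θ1, sigmaReward]
    field_simp
    ring
  have : 0 ≤ φ * (σ - θ) * (σ - θ) / (2 * σ) := by
    have : 0 ≤ σ - θ := by linarith
    positivity
  have : 0 ≤ (φ * (σ - θ)) ^ 2 / (2 * σ * (1 - φ)) := by positivity
  linarith

theorem sigmaReward_S_le (hσ : 0 < σ) (hφ : 0 ≤ φ) (hφ1 : φ < 1) (hθ : θ ∈ Set.Icc 0 σ) :
    sigmaReward σ τ α (S σ φ θ)
      ≤ sigmaReward σ τ α φ + σ * α ^ 2 / 2 * (φ * (σ - θ) / (1 - φ) ^ 2) := by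
  obtain ⟨hθ0, hθσ⟩ := hθ
  have hx : 0 < 1 - φ := by linarith
  have hd : 0 ≤ φ - S σ φ θ := by linarith [S_le_self hσ hφ ⟨hθ0, hθσ⟩]
  have hdu : φ - S σ φ θ ≤ φ * (σ - θ) := by
    rw [sub_S_eq hσ.ne', div_le_iff₀ (by positivity)]
    nlinarith [mul_nonneg hφ (sub_nonneg.2 hθσ)]
  have hS1 : 1 - S σ φ θ ≠ 0 := by linarith
  have hgap : 1 / (1 - φ) - 1 / (1 - S σ φ θ) ≤ φ * (σ - θ) / (1 - φ) ^ 2 := calc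
    1 / (1 - φ) - 1 / (1 - S σ φ θ) = (φ - S σ φ θ) / ((1 - φ) * (1 - S σ φ θ)) := by
      field_simp; ring
    _ ≤ (φ - S σ φ θ) / (1 - φ) ^ 2 := by
      rw [sq]; gcongr; linarith
    _ ≤ φ * (σ - θ) / (1 - φ) ^ 2 := by gcongr
  have hexp : sigmaReward σ τ α (S σ φ θ) = sigmaReward σ τ α φ
      + σ * α ^ 2 / 2 * (1 / (1 - φ) - 1 / (1 - S σ φ θ)) := by
    rw [sigmaReward, sigmaReward]; field_simp; ring
  rw [hexp]
  gcongr

theorem tippingGap_nonneg_of_lt (hτ : 0 < τ) (hασ : 0 ≤ α * σ) (hγ : 0 ≤ γ) (hγ1 : γ < 1)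
    (h : φ < 1 - α * σ / (2 * τ) * (1 + √(1 + 2 * τ * γ / (1 - γ)))) :
    0 ≤ tippingGap σ τ α γ φ := by
  set s := √(1 + 2 * τ * γ / (1 - γ))
  have h1γ : 0 < 1 - γ := by linarith
  have hs : 0 ≤ s := Real.sqrt_nonneg _
  have hs2 : s ^ 2 = 1 + 2 * τ * γ / (1 - γ) := Real.sq_sqrt (by positivity)
  have hlt : α * σ * s < 2 * τ * (1 - φ) - α * σ := by
    have : α * σ * (1 + s) / (2 * τ) < 1 - φ := by rw [← div_mul_eq_mul_div]; linarith
    rw [div_lt_iff₀ (by positivity)] at this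
    linarith
  have hsq : (α * σ * s) ^ 2 ≤ (2 * τ * (1 - φ) - α * σ) ^ 2 :=
    pow_le_pow_left₀ (by positivity) hlt.le 2
  have hs2' : (1 - γ) * (α * σ * s) ^ 2 = (α * σ) ^ 2 * (1 - γ + 2 * τ * γ) := by
    rw [mul_pow, hs2]; field_simp
  have : 0 ≤ 4 * τ * tippingGap σ τ α γ φ := by
    rw [tippingGap]
    linarith [mul_le_mul_of_nonneg_left hsq h1γ.le]
  exact nonneg_of_mul_nonneg_right this (by positivity)

theorem tippingGap_nonneg_of_le {φ₀ : ℝ} (hτ : 0 ≤ τ) (hγ : 0 ≤ γ) (hγ1 : γ < 1)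
    (hφ₀ : φ₀ < 1) (hφ : φ ≤ φ₀) (h : 0 ≤ tippingGap σ τ α γ φ₀) :
    0 ≤ tippingGap σ τ α γ φ := by
  rw [tippingGap] at h ⊢
  have h1γ : 0 < 1 - γ := by linarith
  have hx₀ : 0 < 1 - φ₀ := by linarith
  have hvertex : 0 ≤ τ * (1 - φ₀) - σ * α := by
    have : 0 ≤ (1 - γ) * (1 - φ₀) * (τ * (1 - φ₀) - σ * α) := by
      nlinarith [sq_nonneg (σ * α)]
    exact nonneg_of_mul_nonneg_right this (mul_pos h1γ hx₀)
  have hmono : τ * (1 - φ₀) ^ 2 - σ * α * (1 - φ₀) ≤ τ * (1 - φ) ^ 2 - σ * α * (1 - φ) := by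
    nlinarith [mul_nonneg (sub_nonneg.2 hφ) hvertex, mul_nonneg (sub_nonneg.2 hφ)
      (mul_nonneg hτ (sub_nonneg.2 hφ)), mul_nonneg (sub_nonneg.2 hφ) (mul_nonneg hτ hx₀.le)]
  nlinarith

theorem R_add_mul_sigmaReward_S_le (hσ : 0 < σ) (hγ : 0 ≤ γ) (hγ1 : γ < 1) (hφ : 0 ≤ φ)
    (hφ1 : φ < 1) (hθ : θ ∈ Set.Icc 0 σ) (hgap : 0 ≤ tippingGap σ τ α γ φ) :
    R σ τ α φ θ + γ * (sigmaReward σ τ α (S σ φ θ) / (1 - γ)) ≤ sigmaReward σ τ α φ / (1 - γ) := by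
  have h1γ : 0 < 1 - γ := by linarith
  have hx : 0 < 1 - φ := by linarith
  have hR := R_le_sigmaReward_add (τ := τ) (α := α) hσ hφ hφ1 hθ.2
  have hS := sigmaReward_S_le (τ := τ) (α := α) hσ hφ hφ1 hθ
  have hfirst : (1 - γ) * (φ * (σ - θ) * (α / (1 - φ) - τ / σ))
      + γ * (σ * α ^ 2 / 2 * (φ * (σ - θ) / (1 - φ) ^ 2))
      = -(φ * (σ - θ) / (σ * (1 - φ) ^ 2) * tippingGap σ τ α γ φ) := by
    rw [tippingGap]; field_simp; ring
  have : 0 ≤ φ * (σ - θ) / (σ * (1 - φ) ^ 2) * tippingGap σ τ α γ φ := by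
    have := hθ.2; have : 0 ≤ σ - θ := by linarith
    positivity
  have hclear : (R σ τ α φ θ + γ * (sigmaReward σ τ α (S σ φ θ) / (1 - γ))) * (1 - γ)
      = (1 - γ) * R σ τ α φ θ + γ * sigmaReward σ τ α (S σ φ θ) := by
    field_simp
  rw [le_div_iff₀ h1γ, hclear]
  linarith [mul_le_mul_of_nonneg_left hR h1γ.le, mul_le_mul_of_nonneg_left hS hγ]

end

section Bellman

variable {σ τ α γ : ℝ} {V : ℝ → ℝ}

theorem bellman_summand_le (hσ : 0 < σ) (hσ2 : σ ≤ 2) (hγ : 0 ≤ γ) (hγ1 : γ < 1)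
    {φ₀ c : ℝ} (hφ₀ : φ₀ < 1) (hV : ∀ x ∈ Set.Icc 0 φ₀, V x ≤ sigmaReward σ τ α x / (1 - γ) + c)
    {φ θ : ℝ} (hφ : φ ∈ Set.Icc 0 φ₀) (hθ : θ ∈ Set.Icc 0 σ)
    (hgap : 0 ≤ tippingGap σ τ α γ φ) :
    R σ τ α φ θ + γ * V (S σ φ θ) ≤ sigmaReward σ τ α φ / (1 - γ) + γ * c := by
  have hS : S σ φ θ ∈ Set.Icc 0 φ₀ :=
    ⟨S_nonneg hσ hσ2 hφ.1, (S_le_self hσ hφ.1 hθ).trans hφ.2⟩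
  have := R_add_mul_sigmaReward_S_le hσ hγ hγ1 hφ.1 (hφ.2.trans_lt hφ₀) hθ hgap
  nlinarith [mul_le_mul_of_nonneg_left (hV _ hS) hγ]

theorem le_sigmaReward_div_of_isBellmanFixedPt (hσ : 0 < σ) (hσ2 : σ ≤ 2) (hτ : 0 ≤ τ)
    (hα : 0 < α) (hγ : 0 ≤ γ) (hγ1 : γ < 1) (hVc : ContinuousOn V (Set.Icc 0 1))
    (hVfix : ∀ φ ∈ Set.Icc (0 : ℝ) 1, V φ = T σ τ α γ V φ) {φ₀ : ℝ} (hφ₀ : φ₀ ≤ 1 - α)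
    (hgap : 0 ≤ tippingGap σ τ α γ φ₀) :
    ∀ φ ∈ Set.Icc 0 φ₀, V φ ≤ sigmaReward σ τ α φ / (1 - γ) := by
  have hφ₀1 : φ₀ < 1 := by linarith
  have hsub : Set.Icc 0 φ₀ ⊆ Set.Icc (0 : ℝ) 1 := Set.Icc_subset_Icc_right hφ₀1.le
  have hW : ContinuousOn (fun φ => sigmaReward σ τ α φ / (1 - γ)) (Set.Icc 0 φ₀) := by
    unfold sigmaReward
    fun_prop (disch := intro x hx; linarith [hx.2])
  refine isCompact_Icc.forall_le_of_sub_le_mul (hVc.mono hsub) hW hγ1 ?_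
  intro ψ hψ c _ hc
  rw [hVfix ψ (hsub hψ), T, sub_le_iff_le_add']
  refine csSup_le ((Set.nonempty_of_mem (sigma_mem_Θ hσ hα.le (by linarith [hψ.2]))).image _) ?_
  rintro _ ⟨θ, hθ, rfl⟩
  exact bellman_summand_le hσ hσ2 hγ hγ1 hφ₀1 (fun x hx => by linarith [hc x hx])
    hψ hθ.1 (tippingGap_nonneg_of_le hτ hγ hγ1 hφ₀1 hψ.2 hgap)

end Bellman

theorem sigma_optimal_below_tipping_point_general (σ τ α γ : ℝ) (hσ : 0 < σ)
    (hτ : 0 < τ) (hστ : σ + τ ≤ 1) (hα : 0 < α)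
    (hγ : 0 < γ) (hγ1 : γ < 1)
    (V : ℝ → ℝ) (hVc : ContinuousOn V (Set.Icc (0 : ℝ) 1))
    (hVfix : ∀ φ0 ∈ Set.Icc (0 : ℝ) 1, V φ0 = T σ τ α γ V φ0)
    (φ0 : ℝ) (hφ0 : 0 ≤ φ0) (hφ0lt : φ0 < φstar σ τ α γ) :
    σ ∈ Θ σ α φ0 ∧
    V φ0 = R σ τ α φ0 σ + γ * V (S σ φ0 σ) ∧
    V φ0 = R σ τ α φ0 σ / (1 - γ) ∧
    V φ0 = (α / (1 - γ)) * ((σ + τ) - σ * α / (2 * (1 - φ0))) := by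
  obtain ⟨hφα, hφ0tip⟩ : φ0 < 1 - α ∧ _ := lt_min_iff.1 <|
    (lt_max_iff.1 hφ0lt).resolve_left hφ0.not_gt
  have hgap := tippingGap_nonneg_of_lt hτ (by positivity) hγ.le hγ1 hφ0tip
  have hσΘ := sigma_mem_Θ hσ hα.le hφα.le
  have hR := R_self (τ := τ) (α := α) hσ.ne' (by linarith : φ0 < 1)
  have hle := le_sigmaReward_div_of_isBellmanFixedPt hσ (by linarith) hτ.le hα hγ.le hγ1 hVc
    hVfix hφα.le hgap
  have hmem : φ0 ∈ Set.Icc 0 φ0 := ⟨hφ0, le_rfl⟩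
  have hge : R σ τ α φ0 σ + γ * V (S σ φ0 σ) ≤ V φ0 := by
    rw [hVfix φ0 ⟨hφ0, by linarith⟩, T]
    refine le_csSup ⟨sigmaReward σ τ α φ0 / (1 - γ) + γ * 0, ?_⟩ ⟨σ, hσΘ, rfl⟩
    rintro _ ⟨θ, hθ, rfl⟩
    exact bellman_summand_le hσ (by linarith) hγ.le hγ1 (by linarith)
      (fun x hx => by linarith [hle x hx]) hmem hθ.1 hgap
  rw [S_self, hR] at hge ⊢
  have h1γ : 0 < 1 - γ := by linarith
  have hx : 1 - φ0 ≠ 0 := by linarith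
  have hV : V φ0 = sigmaReward σ τ α φ0 / (1 - γ) := by
    refine le_antisymm (hle φ0 hmem) ?_
    rw [div_le_iff₀ h1γ]
    linarith
  refine ⟨hσΘ, ?_, hV, ?_⟩
  · rw [hV, sigmaReward]; field_simp; ring
  · rw [hV, sigmaReward]; field_simp

/-- Below the tipping point φ0*, the threshold σ is optimal and the value takes
the closed form (α/(1−γ))((σ+τ) − σα/(2(1−φ0))). -/
theorem sigma_optimal_below_tipping_point (σ τ α γ : ℝ) (hσ : 0 < σ)
    (hτ : 0 < τ) (hστ : σ + τ ≤ 1) (hα : 0 < α) (hα1 : α < 1)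
    (hγ : 0 < γ) (hγ1 : γ < 1)
    (V : ℝ → ℝ) (hVc : ContinuousOn V (Set.Icc (0 : ℝ) 1))
    (hVfix : ∀ φ0 ∈ Set.Icc (0 : ℝ) 1, V φ0 = T σ τ α γ V φ0)
    (φ0 : ℝ) (hφ0 : 0 ≤ φ0) (hφ0lt : φ0 < φstar σ τ α γ) :
    σ ∈ Θ σ α φ0 ∧
    V φ0 = R σ τ α φ0 σ + γ * V (S σ φ0 σ) ∧
    V φ0 = R σ τ α φ0 σ / (1 - γ) ∧
    V φ0 = (α / (1 - γ)) * ((σ + τ) - σ * α / (2 * (1 - φ0))) :=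
  sigma_optimal_below_tipping_point_general σ τ α γ hσ hτ hστ hα hγ hγ1 V hVc hVfix φ0 hφ0 hφ0lt
end

section
/- (Characterization of γ*.) Let α, σ, τ, γ be reals with α > 0, σ > 0, 0 < τ < 1, 0 < γ < 1, and τ > ασ. Then 1 − (ασ/(2τ))·(1 + √(1 + 2τγ/(1−γ))) ≤ 0 if and only if γ ≥ 1 − ((1/(2τ))·(2τ/(ασ) − 1)² − 1/(2τ) + 1)⁻¹. -/
/-!
With `c = ασ/(2τ)` and `A = 1/c - 1 = 2τ/(ασ) - 1 > 1`, the tipping point is nonpositive iff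
`A ≤ √(1 + 2τγ/(1-γ))`, i.e. iff `A² - 1 ≤ 2τγ/(1-γ)`; clearing the denominator `1 - γ` turns
this into a lower bound on `γ`, which is the stated threshold.
-/

lemma one_sub_mul_one_add_nonpos_iff {c s : ℝ} (hc : 0 < c) :
    1 - c * (1 + s) ≤ 0 ↔ c⁻¹ - 1 ≤ s := by
  rw [sub_nonpos, ← inv_mul_le_iff₀ hc, mul_one, sub_le_iff_le_add']

lemma le_mul_div_one_sub_iff {a b γ : ℝ} (ha : 0 ≤ a) (hb : 0 < b) (hγ : γ < 1) :
    a ≤ b * γ / (1 - γ) ↔ 1 - (a / b + 1)⁻¹ ≤ γ := by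
  have hγ' : 0 < 1 - γ := sub_pos.mpr hγ
  rw [div_add_one hb.ne', inv_div, sub_le_comm, le_div_iff₀ hγ', le_div_iff₀ (by positivity)]
  constructor <;> intro h <;> linarith

theorem gamma_star_characterization_general (α σ τ γ : ℝ) (hα : 0 < α) (hσ : 0 < σ)
    (hγ1 : γ < 1) (hτα : τ > α * σ) :
    1 - (α * σ / (2 * τ)) * (1 + Real.sqrt (1 + 2 * τ * γ / (1 - γ))) ≤ 0 ↔
      γ ≥ 1 - ((1 / (2 * τ)) * (2 * τ / (α * σ) - 1) ^ 2 - 1 / (2 * τ) + 1)⁻¹ := by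
  have hs : 0 < α * σ := mul_pos hα hσ
  have h2τ : 0 < 2 * τ := by linarith
  set A := 2 * τ / (α * σ) - 1
  have hA : 1 < A := by
    have : 2 < 2 * τ / (α * σ) := by rw [lt_div_iff₀ hs]; linarith
    linarith
  have hA2 : 0 ≤ A ^ 2 - 1 := by nlinarith
  rw [one_sub_mul_one_add_nonpos_iff (by positivity), inv_div,
    Real.le_sqrt' (by linarith), ← sub_le_iff_le_add', le_mul_div_one_sub_iff hA2 h2τ hγ1]
  ring_nf

/-- Characterization of γ*: persistent affirmative action (unclamped tipping
point ≤ 0) holds iff γ ≥ 1 − ((1/(2τ))(2τ/(ασ) − 1)² − 1/(2τ) + 1)⁻¹. -/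
theorem gamma_star_characterization (α σ τ γ : ℝ) (hα : 0 < α) (hσ : 0 < σ)
    (hτ : 0 < τ) (hτ1 : τ < 1) (hγ : 0 < γ) (hγ1 : γ < 1) (hτα : τ > α * σ) :
    1 - (α * σ / (2 * τ)) * (1 + Real.sqrt (1 + 2 * τ * γ / (1 - γ))) ≤ 0 ↔
      γ ≥ 1 - ((1 / (2 * τ)) * (2 * τ / (α * σ) - 1) ^ 2 - 1 / (2 * τ) + 1)⁻¹ :=
  gamma_star_characterization_general α σ τ γ hα hσ hγ1 hτα
end

section
/- (Characterization of τ*.) Let α, τ, γ be reals with α > 0, 0 < τ < 1, 0 < γ < 1, set σ = 1 − τ, and assume 2τ > ασ. Then 1 − (ασ/(2τ))·(1 + √(1 + 2τγ/(1−γ))) ≤ 0 if and only if τ ≤ 1 − (−(1+α) + √((1+α)² + 2γα²/(1−γ))) / (γα²/(1−γ)). -/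
/-! Both conditions reduce to the same quadratic inequality in σ = 1 − τ. Write
g = γ/(1−γ) and K = g α² σ² + 2(1+α) σ − 2. Squaring away the square root, the tipping-point
condition becomes (2τ − ασ)² ≤ (ασ)² (1 + 2τg), whose slack is 2τ·K, while the bound on τ says
that σ lies above the positive root of g α² s² + 2(1+α) s − 2, i.e.
(1+α)² + 2gα² ≤ (1 + α + gα²σ)², whose slack is gα²·K. -/

namespace Real

theorem one_sub_div_mul_one_add_sqrt_nonpos_iff {p q X : ℝ} (hq : 0 ≤ q) (hqp : q < p) :
    1 - q / p * (1 + √X) ≤ 0 ↔ (p - q) ^ 2 ≤ q ^ 2 * X := by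
  have hp : 0 < p := hq.trans_lt hqp
  rw [sub_nonpos, div_mul_eq_mul_div, one_le_div₀ hp, mul_one_add,
    ← sub_le_iff_le_add', ← sqrt_sq hq, ← sqrt_mul (sq_nonneg q), sqrt_sq hq,
    le_sqrt' (sub_pos.mpr hqp)]

theorem neg_add_sqrt_div_le_iff {b c D s : ℝ} (hc : 0 < c) (hbs : 0 ≤ b + c * s) :
    (-b + √D) / c ≤ s ↔ D ≤ (b + c * s) ^ 2 := by
  rw [div_le_iff₀ hc, neg_add_le_iff_le_add, mul_comm, sqrt_le_left hbs]

end Real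

/-- Characterization of τ*: with σ = 1 − τ and 2τ > ασ, persistent affirmative
action (unclamped tipping point ≤ 0) holds iff
τ ≤ 1 − (−(1+α) + √((1+α)² + 2γα²/(1−γ))) / (γα²/(1−γ)). -/
theorem tau_star_characterization (α τ γ : ℝ) (hα : 0 < α) (hτ : 0 < τ)
    (hτ1 : τ < 1) (hγ : 0 < γ) (hγ1 : γ < 1)
    (σ : ℝ) (hσ : σ = 1 - τ) (h2τ : 2 * τ > α * σ) :
    1 - (α * σ / (2 * τ)) * (1 + Real.sqrt (1 + 2 * τ * γ / (1 - γ))) ≤ 0 ↔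
      τ ≤ 1 - (-(1 + α) + Real.sqrt ((1 + α) ^ 2 + 2 * γ * α ^ 2 / (1 - γ))) /
        (γ * α ^ 2 / (1 - γ)) := by
  have hσ0 : 0 < σ := by linarith
  have hc : 0 < γ * α ^ 2 / (1 - γ) := by have := sub_pos.mpr hγ1; positivity
  set K := γ / (1 - γ) * α ^ 2 * σ ^ 2 + 2 * (1 + α) * σ - 2
  have hL : (α * σ) ^ 2 * (1 + 2 * τ * γ / (1 - γ)) - (2 * τ - α * σ) ^ 2 = 2 * τ * K := by
    subst hσ; ring
  have hR : (1 + α + γ * α ^ 2 / (1 - γ) * σ) ^ 2 - ((1 + α) ^ 2 + 2 * γ * α ^ 2 / (1 - γ))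
      = γ * α ^ 2 / (1 - γ) * K := by
    ring
  rw [Real.one_sub_div_mul_one_add_sqrt_nonpos_iff (by positivity) h2τ, le_sub_comm, ← hσ,
    Real.neg_add_sqrt_div_le_iff hc (by positivity),
    ← sub_nonneg (b := (2 * τ - α * σ) ^ 2), hL, ← sub_nonneg (b := (1 + α) ^ 2 + _), hR,
    mul_nonneg_iff_of_pos_left (by positivity), mul_nonneg_iff_of_pos_left hc]
end
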